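/- Given Δt > 0, if the variance recursions σ²_{k+i+1} = σ²_{k+i} + Δt²σ'²_{k+i} and σ'²_{k+i+1} = (2/Δt²)σ²_{k+i} + σ'²_{k+i} hold with nonnegative initial values σ²_k, σ'²_k not both zero, then both sequences (σ²_{k+i})_i and (σ'²_{k+i})_i are nondecreasing and σ²_{k+i} → ∞ as i → ∞. -/

import Mathlib

open Filter

theorem tendsto_atTop_of_add_le_succ {u : ℕ → ℝ} {c : ℝ} (hc : 0 < c)
    (hu : ∀ n, u n + c ≤ u (n + 1)) : Tendsto u atTop atTop := by
  have linear_growth : ∀ n : ℕ, u 0 + n * c ≤ u n := by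
    intro n
    induction n with
    | zero => simp
    | succ n ih => push_cast; linarith [hu n]
  refine tendsto_atTop_mono linear_growth (tendsto_atTop_add_const_left _ _ ?_)
  exact tendsto_natCast_atTop_atTop.atTop_mul_const hc

namespace CoupledRecursion

variable {a b : ℝ} {s s' : ℕ → ℝ}

theorem nonneg (hs : ∀ i, s (i + 1) = s i + a * s' i) (hs' : ∀ i, s' (i + 1) = b * s i + s' i)
    (ha : 0 ≤ a) (hb : 0 ≤ b) (hs0 : 0 ≤ s 0) (hs'0 : 0 ≤ s' 0) (n : ℕ) :
    0 ≤ s n ∧ 0 ≤ s' n := by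
  induction n with
  | zero => exact ⟨hs0, hs'0⟩
  | succ n ih =>
    rw [hs, hs']
    exact ⟨by linarith [mul_nonneg ha ih.2], by linarith [mul_nonneg hb ih.1]⟩

theorem monotone_fst (hs : ∀ i, s (i + 1) = s i + a * s' i) (ha : 0 ≤ a)
    (hs'_nonneg : ∀ n, 0 ≤ s' n) : Monotone s :=
  monotone_nat_of_le_succ fun n => by
    rw [hs]; linarith [mul_nonneg ha (hs'_nonneg n)]

theorem monotone_snd (hs' : ∀ i, s' (i + 1) = b * s i + s' i) (hb : 0 ≤ b)
    (hs_nonneg : ∀ n, 0 ≤ s n) : Monotone s' :=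
  monotone_nat_of_le_succ fun n => by
    rw [hs']; linarith [mul_nonneg hb (hs_nonneg n)]

/-- From step one on, `s` grows at least linearly with slope `a * s' 1 > 0`. -/
theorem tendsto_fst_atTop (hs : ∀ i, s (i + 1) = s i + a * s' i)
    (hs' : ∀ i, s' (i + 1) = b * s i + s' i) (ha : 0 < a) (hb : 0 < b)
    (hs0 : 0 ≤ s 0) (hs'0 : 0 ≤ s' 0) (hpos : 0 < s 0 + s' 0) :
    Tendsto s atTop atTop := by
  have hs'1 : 0 < s' 1 := by
    rw [hs']
    rcases hs0.lt_or_eq with h | h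
    · nlinarith [mul_pos hb h]
    · rw [← h]; linarith
  have hnn := nonneg hs hs' ha.le hb.le hs0 hs'0
  have hmono' := monotone_snd hs' hb.le fun n => (hnn n).1
  refine (tendsto_add_atTop_iff_nat 1).mp
    (tendsto_atTop_of_add_le_succ (mul_pos ha hs'1) fun n => ?_)
  rw [hs (n + 1)]
  have := mul_le_mul_of_nonneg_left (hmono' (Nat.le_add_left 1 n)) ha.le
  linarith

end CoupledRecursion

/-- Under the variance propagation recursions
`σ²_{i+1} = σ²_i + Δt² σ'²_i` and `σ'²_{i+1} = (2/Δt²) σ²_i + σ'²_i`, with nonnegative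
initial values not both zero, both sequences are nondecreasing and `σ²_i → ∞`. -/
theorem stmt_18 (Δt : ℝ) (hΔt : 0 < Δt) (s s' : ℕ → ℝ)
    (hs0 : 0 ≤ s 0) (hs'0 : 0 ≤ s' 0) (hpos : 0 < s 0 + s' 0)
    (hs : ∀ i, s (i + 1) = s i + Δt ^ 2 * s' i)
    (hs' : ∀ i, s' (i + 1) = (2 / Δt ^ 2) * s i + s' i) :
    Monotone s ∧ Monotone s' ∧ Tendsto s atTop atTop := by
  have ha : 0 < Δt ^ 2 := by positivity
  have hb : 0 < 2 / Δt ^ 2 := by positivity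
  have hnn := CoupledRecursion.nonneg hs hs' ha.le hb.le hs0 hs'0
  exact ⟨CoupledRecursion.monotone_fst hs ha.le fun n => (hnn n).2,
    CoupledRecursion.monotone_snd hs' hb.le fun n => (hnn n).1,
    CoupledRecursion.tendsto_fst_atTop hs hs' ha hb hs0 hs'0 hpos⟩
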